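/- Let ξ₁,…,ξ_n be distinct points on the unit circle 𝕋, m₁,…,m_n positive integers, p(z) = ∏_{k=1}^n (z−ξ_k)^{m_k}, and let W : [−π,π] → [0,∞) be Lebesgue integrable. Define, for z in the open unit disk 𝔻, F(z) = 2p(z)·∫_{−π}^{π} (e^{it}/(e^{it}−z))·(|p(e^{it})|/p(e^{it}))·W(t) dt/(2π) and F₀(z) = ∫_{−π}^{π} ((e^{it}+z)/(e^{it}−z))·|p(e^{it})|·W(t) dt/(2π). Then both integrals converge for every z ∈ 𝔻, and there exists a complex polynomial q such that F(z) = F₀(z) + q(z) for all z ∈ 𝔻. -/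

import Mathlib

open MeasureTheory Real Set Filter

noncomputable section

/-- The open unit disk in `ℂ`. -/
def unitDisk : Set ℂ := Metric.ball 0 1

/-- The point `e^{it}` on the unit circle. -/
def circ (t : ℝ) : ℂ := Complex.exp (t * Complex.I)

/-- Membership in the Hardy space `H²` of the unit disk:
`f` is analytic on `𝔻` and `sup_{0<r<1} ∫_𝕋 |f(rξ)|² dm(ξ) < ∞`. -/
def MemH2 (f : ℂ → ℂ) : Prop :=
  DifferentiableOn ℂ f unitDisk ∧
  ∃ C : ℝ, ∀ r : ℝ, 0 < r → r < 1 →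
    (∫ t in (-π)..π, ‖f (r * circ t)‖ ^ 2) / (2 * π) ≤ C

/-- The square of the `H²` norm, as a supremum over radii `0 < r < 1`. -/
def H2normSq (f : ℂ → ℂ) : ℝ :=
  ⨆ r : Set.Ioo (0:ℝ) 1, (∫ t in (-π)..π, ‖f ((r : ℝ) * circ t)‖ ^ 2) / (2 * π)

/-- `f` is an outer function on the unit disk: `f = exp(∫_𝕋 (ξ+z)/(ξ-z) g(ξ) dm(ξ))`
for some real-valued integrable `g` on `𝕋`. -/
def IsOuter (f : ℂ → ℂ) : Prop :=
  ∃ g : ℝ → ℝ, IntervalIntegrable g volume (-π) π ∧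
    ∀ z ∈ unitDisk, f z =
      Complex.exp ((∫ t in (-π)..π, ((circ t + z) / (circ t - z)) * (g t : ℂ)) / (2 * (π : ℂ)))

/-- `f` is bounded on the unit disk. -/
def BoundedOnDisk (f : ℂ → ℂ) : Prop :=
  ∃ M : ℝ, ∀ z ∈ unitDisk, ‖f z‖ ≤ M

/-- Membership in `M(ā₁) = a₁ H² + P_{N-1}`. -/
def MemMa (a₁ : ℂ → ℂ) (N : ℕ) (f : ℂ → ℂ) : Prop :=
  ∃ g : ℂ → ℂ, MemH2 g ∧ ∃ q : Polynomial ℂ, q.degree < (N : WithBot ℕ) ∧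
    ∀ z ∈ unitDisk, f z = a₁ z * g z + q.eval z


/-! For `|w| = 1` put `u = |p(w)|/p(w)`, so that `u p(w) = |p(w)|` (also when `p(w) = 0`). Then
`2p(z) · w/(w-z) · u = (w+z)/(w-z) · |p(w)| + u · (p(w) - 2w Δ(w,z))`,
where `Δ(w,z) = (p(z) - p(w))/(z - w)` is a polynomial in the two variables. Multiplying by `W`
and integrating, the last term becomes a polynomial in `z` whose coefficients are integrals of
bounded measurable functions against `W`. -/

section

open Polynomial Polynomial.Bivariate

theorem Polynomial.exists_sub_mul_evalEval_eq_eval_sub {R : Type*} [CommRing R] (P : R[X]) :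
    ∃ Δ : R[X][Y], ∀ x y : R, (y - x) * Δ.evalEval x y = P.eval y - P.eval x := by
  obtain ⟨Δ, hΔ⟩ := X_sub_C_dvd_sub_C_eval (p := P.map C) (a := X)
  rw [eval_map, eval₂_C_X] at hΔ
  refine ⟨Δ, fun x y => ?_⟩
  simpa [evalEval_sub, evalEval_mul, evalEval_map_C, evalEval_C, evalEval_X] using
    (congrArg (evalEval x y) hΔ).symm

theorem exists_polynomial_intervalIntegral_mul_evalEval_eq {𝕜 : Type*} [RCLike 𝕜]
    {g γ : ℝ → 𝕜} {a b : ℝ} {μ : Measure ℝ} (hg : IntervalIntegrable g μ a b) (hγ : Continuous γ)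
    (R : 𝕜[X][Y]) :
    ∃ q : 𝕜[X], ∀ z, ∫ t in a..b, g t * R.evalEval (γ t) z ∂μ = q.eval z := by
  have hexpand : ∀ x y, R.evalEval x y = ∑ i ∈ R.support, (R.coeff i).eval x * y ^ i := by
    intro x y
    rw [evalEval, eval_eq_sum (p := R), sum_def, eval_finsetSum]
    simp only [eval_mul, eval_pow, eval_C]
  refine ⟨∑ i ∈ R.support, C (∫ t in a..b, g t * (R.coeff i).eval (γ t) ∂μ) * X ^ i, fun z => ?_⟩
  have hint : ∀ i ∈ R.support,
      IntervalIntegrable (fun t => g t * (R.coeff i).eval (γ t) * z ^ i) μ a b :=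
    fun i _ => (hg.mul_continuousOn ((R.coeff i).continuous.comp hγ).continuousOn).mul_const _
  simp only [hexpand, Finset.mul_sum, ← mul_assoc, eval_finsetSum, eval_mul, eval_C, eval_pow,
    eval_X]
  rw [intervalIntegral.integral_finsetSum hint]
  exact Finset.sum_congr rfl fun i _ => intervalIntegral.integral_mul_const _ _

theorem IntervalIntegrable.bdd_mul {𝕜 : Type*} [NormedDivisionRing 𝕜] {f g : ℝ → 𝕜} {a b c : ℝ}
    {μ : Measure ℝ} (hg : IntervalIntegrable g μ a b) (hf : AEStronglyMeasurable f μ)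
    (hbound : ∀ x, ‖f x‖ ≤ c) :
    IntervalIntegrable (fun x => f x * g x) μ a b :=
  ⟨hg.1.bdd_mul hf.restrict (.of_forall hbound), hg.2.bdd_mul hf.restrict (.of_forall hbound)⟩

theorem Complex.norm_ofReal_norm_div_self_le_one (a : ℂ) : ‖(‖a‖ : ℂ) / a‖ ≤ 1 := by
  rw [norm_div, Complex.norm_real, norm_norm]
  exact div_self_le_one _

theorem Complex.ofReal_norm_div_self_mul_self (a : ℂ) : (‖a‖ : ℂ) / a * a = ‖a‖ := by
  rcases eq_or_ne a 0 with rfl | ha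
  · simp
  · exact div_mul_cancel₀ _ ha

theorem cauchy_kernel_mul_eq_herglotz_kernel_add {w z a b d u c : ℂ} (hwz : w - z ≠ 0)
    (hd : (z - w) * d = b - a) (hu : u * a = ‖a‖) :
    2 * b * (w / (w - z) * u * c) = (w + z) / (w - z) * ‖a‖ * c + u * c * (a - 2 * w * d) := by
  rw [← hu]
  field_simp
  linear_combination (-2 * w * u * c) * hd

theorem norm_circ (t : ℝ) : ‖circ t‖ = 1 := Complex.norm_exp_ofReal_mul_I t

@[fun_prop]
theorem continuous_circ : Continuous circ := by
  unfold circ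
  fun_prop

theorem circ_sub_ne_zero {z : ℂ} (hz : z ∈ unitDisk) (t : ℝ) : circ t - z ≠ 0 := by
  rw [sub_ne_zero]
  rintro rfl
  simp [unitDisk, norm_circ] at hz

variable {p : ℂ → ℂ} {W : ℝ → ℂ} {a b : ℝ}

theorem intervalIntegrable_ofReal_norm_div_self_comp_circ_mul (hp : Measurable p)
    (hW : IntervalIntegrable W volume a b) :
    IntervalIntegrable (fun t => (‖p (circ t)‖ : ℂ) / p (circ t) * W t) volume a b :=
  hW.bdd_mul
    ((hp.comp continuous_circ.measurable).norm.complex_ofReal.div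
      (hp.comp continuous_circ.measurable)).aestronglyMeasurable
    fun _ => Complex.norm_ofReal_norm_div_self_le_one _

theorem intervalIntegrable_cauchy_integrand (hp : Measurable p)
    (hW : IntervalIntegrable W volume a b) {z : ℂ} (hz : z ∈ unitDisk) :
    IntervalIntegrable
      (fun t => circ t / (circ t - z) * ((‖p (circ t)‖ : ℂ) / p (circ t)) * W t) volume a b := by
  simpa only [mul_assoc] using
    (intervalIntegrable_ofReal_norm_div_self_comp_circ_mul hp hW).continuousOn_mul
      (g := fun t => circ t / (circ t - z))
      (continuous_circ.div (by fun_prop) (circ_sub_ne_zero hz)).continuousOn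

theorem intervalIntegrable_herglotz_integrand (hp : Continuous p)
    (hW : IntervalIntegrable W volume a b) {z : ℂ} (hz : z ∈ unitDisk) :
    IntervalIntegrable (fun t => (circ t + z) / (circ t - z) * (‖p (circ t)‖ : ℂ) * W t)
      volume a b :=
  hW.continuousOn_mul (g := fun t => (circ t + z) / (circ t - z) * (‖p (circ t)‖ : ℂ))
    (((continuous_circ.add continuous_const).div (by fun_prop) (circ_sub_ne_zero hz)).mul
      (by fun_prop)).continuousOn

theorem exists_polynomial_cauchy_integral_eq_herglotz_integral_add (P : ℂ[X])
    (hW : IntervalIntegrable W volume a b) :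
    ∃ q : ℂ[X], ∀ z ∈ unitDisk,
      2 * P.eval z *
          ∫ t in a..b, circ t / (circ t - z) * (‖P.eval (circ t)‖ / P.eval (circ t)) * W t =
        (∫ t in a..b, (circ t + z) / (circ t - z) * ‖P.eval (circ t)‖ * W t) + q.eval z := by
  obtain ⟨Δ, hΔ⟩ := P.exists_sub_mul_evalEval_eq_eval_sub
  set R : ℂ[X][Y] := C P - C (2 * X) * Δ
  have hg := intervalIntegrable_ofReal_norm_div_self_comp_circ_mul P.continuous.measurable hW
  obtain ⟨q, hq⟩ := exists_polynomial_intervalIntegral_mul_evalEval_eq hg continuous_circ R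
  refine ⟨q, fun z hz => ?_⟩
  have hR : Continuous fun t => R.evalEval (circ t) z :=
    (R.eval (C z)).continuous.comp continuous_circ
  rw [← hq, ← intervalIntegral.integral_const_mul,
    ← intervalIntegral.integral_add (intervalIntegrable_herglotz_integrand P.continuous hW hz)
      (hg.mul_continuousOn hR.continuousOn)]
  refine intervalIntegral.integral_congr fun t _ => ?_
  simp only [R, evalEval_sub, evalEval_mul, evalEval_C, eval_mul, eval_ofNat, eval_X]
  exact cauchy_kernel_mul_eq_herglotz_kernel_add (circ_sub_ne_zero hz t) (hΔ _ _)
    (Complex.ofReal_norm_div_self_mul_self _)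

end

open Polynomial in
theorem cauchy_transform_decomposition_general (n : ℕ) (ξ : Fin n → ℂ) (m : Fin n → ℕ)
    (p : ℂ → ℂ) (hp : ∀ z, p z = ∏ k, (z - ξ k) ^ m k)
    (W : ℝ → ℝ) (hWint : IntervalIntegrable W volume (-π) π) :
    (∀ z ∈ unitDisk,
      IntervalIntegrable
        (fun t => (circ t / (circ t - z)) * ((‖p (circ t)‖ : ℂ) / p (circ t)) * (W t : ℂ))
        volume (-π) π ∧
      IntervalIntegrable
        (fun t => ((circ t + z) / (circ t - z)) * (‖p (circ t)‖ : ℂ) * (W t : ℂ))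
        volume (-π) π) ∧
    ∃ q : Polynomial ℂ, ∀ z ∈ unitDisk,
      2 * p z *
          ((∫ t in (-π)..π,
              (circ t / (circ t - z)) * ((‖p (circ t)‖ : ℂ) / p (circ t)) * (W t : ℂ)) /
            (2 * (π : ℂ))) =
        (∫ t in (-π)..π,
            ((circ t + z) / (circ t - z)) * (‖p (circ t)‖ : ℂ) * (W t : ℂ)) /
            (2 * (π : ℂ)) +
          q.eval z := by
  obtain ⟨P, hP⟩ : ∃ P : ℂ[X], ∀ z, P.eval z = p z :=
    ⟨∏ k, (X - C (ξ k)) ^ m k, fun z => by simp [hp, eval_prod]⟩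
  obtain rfl : (fun z => P.eval z) = p := funext hP
  have hW : IntervalIntegrable (fun t => (W t : ℂ)) volume (-π) π :=
    ⟨hWint.1.ofReal, hWint.2.ofReal⟩
  refine ⟨fun z hz => ⟨intervalIntegrable_cauchy_integrand P.continuous.measurable hW hz,
    intervalIntegrable_herglotz_integrand P.continuous hW hz⟩, ?_⟩
  obtain ⟨q, hq⟩ := exists_polynomial_cauchy_integral_eq_herglotz_integral_add P hW
  refine ⟨C (2 * (π : ℂ))⁻¹ * q, fun z hz => ?_⟩
  rw [eval_mul, eval_C, mul_div_assoc', hq z hz]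
  ring

/-- the key construction in the proof of Theorem 1.2. With
`p(z) = ∏ (z-ξ_k)^{m_k}` (roots on `𝕋`) and integrable `W ≥ 0`, the integrals defining
`F(z) = 2p(z)∫ (e^{it}/(e^{it}-z))·(|p(e^{it})|/p(e^{it}))·W(t) dt/2π` and
`F₀(z) = ∫ ((e^{it}+z)/(e^{it}-z))·|p(e^{it})|·W(t) dt/2π` converge for every `z ∈ 𝔻`,
and `F = F₀ + q` on `𝔻` for some polynomial `q`. -/
theorem cauchy_transform_decomposition (n : ℕ) (ξ : Fin n → ℂ) (hξ : ∀ k, ‖ξ k‖ = 1)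
    (hinj : Function.Injective ξ) (m : Fin n → ℕ) (hm : ∀ k, 0 < m k)
    (p : ℂ → ℂ) (hp : ∀ z, p z = ∏ k, (z - ξ k) ^ m k)
    (W : ℝ → ℝ) (hW : ∀ t, 0 ≤ W t) (hWint : IntervalIntegrable W volume (-π) π) :
    (∀ z ∈ unitDisk,
      IntervalIntegrable
        (fun t => (circ t / (circ t - z)) * ((‖p (circ t)‖ : ℂ) / p (circ t)) * (W t : ℂ))
        volume (-π) π ∧
      IntervalIntegrable
        (fun t => ((circ t + z) / (circ t - z)) * (‖p (circ t)‖ : ℂ) * (W t : ℂ))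
        volume (-π) π) ∧
    ∃ q : Polynomial ℂ, ∀ z ∈ unitDisk,
      2 * p z *
          ((∫ t in (-π)..π,
              (circ t / (circ t - z)) * ((‖p (circ t)‖ : ℂ) / p (circ t)) * (W t : ℂ)) /
            (2 * (π : ℂ))) =
        (∫ t in (-π)..π,
            ((circ t + z) / (circ t - z)) * (‖p (circ t)‖ : ℂ) * (W t : ℂ)) /
            (2 * (π : ℂ)) +
          q.eval z :=
  cauchy_transform_decomposition_general n ξ m p hp W hWint
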